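/- arXiv:2601.08962 — 2 statements merged into one kernel-verified Lean document; each statement's English description precedes it below -/
import Mathlib

section
/- For every real q ≥ 1 and all reals a ≥ 0 and b ≥ 0 there exists a constant C > 0 such that for all x, y ∈ ℝ and every u > 0: | |x+y|^q · 1_{|x+y| ≤ u} − |x|^q | ≤ C · ( |x|^{q+a}/u^a + |x|^q·|y|^b/u^b + (min(|y|, u))^q + (if q > 1 then |x|^{q−1}·min(|y|, u) else 0) ). -/
/-!
Write `m = min |y| u`. If `|x| ≥ u/2`, both truncated powers are at most a multiple of `|x|^q`,
which is dominated by `|x|^(q+a) / u^a`. If `|x| < u/2` but `|x + y| > u`, the increment is large,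
`|y| ≥ u/2`, so `|x|^q` is dominated by `|x|^q |y|^b / u^b`. Otherwise nothing is truncated,
`|y| ≤ 3u/2` gives `|y| ≤ 2m`, and the mean value bound
`||x + y|^q - |x|^q| ≤ q (|x| + |y|)^(q-1) |y|` is controlled by `|x|^(q-1) m + m^q`.
-/

open Real

lemma rpow_sub_rpow_le_mul_rpow_sub_one {q s t : ℝ} (hq : 1 ≤ q) (ht : 0 ≤ t)
    (hts : t ≤ s) : s ^ q - t ^ q ≤ q * s ^ (q - 1) * (s - t) := by
  rcases (ht.trans hts).eq_or_lt with hs | hs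
  · obtain rfl : t = 0 := le_antisymm (hs ▸ hts) ht
    simp [← hs]
  -- Bernoulli's inequality `1 + q (r - 1) ≤ r^q` at `r = t / s`, rescaled by `s^q`.
  have bernoulli := one_add_mul_self_le_rpow_one_add (s := t / s - 1)
    (by linarith [div_nonneg ht hs.le]) hq
  rw [add_sub_cancel, div_rpow ht hs.le, le_div_iff₀ (rpow_pos_of_pos hs q)] at bernoulli
  have hsq : s ^ q = s ^ (q - 1) * s := by rw [rpow_sub_one hs.ne', div_mul_cancel₀ _ hs.ne']
  have expand : (1 + q * (t / s - 1)) * s ^ q = s ^ q + q * s ^ (q - 1) * (t - s) := by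
    rw [hsq]; field_simp
  linarith

lemma abs_rpow_sub_rpow_le {q s t : ℝ} (hq : 1 ≤ q) (hs : 0 ≤ s) (ht : 0 ≤ t) :
    |s ^ q - t ^ q| ≤ q * max s t ^ (q - 1) * |s - t| := by
  wlog hts : t ≤ s generalizing s t
  · rw [abs_sub_comm, max_comm, abs_sub_comm s]
    exact this ht hs (le_of_not_ge hts)
  have hmono : t ^ q ≤ s ^ q := rpow_le_rpow ht hts (by linarith)
  rw [abs_of_nonneg (sub_nonneg.2 hmono), abs_of_nonneg (sub_nonneg.2 hts), max_eq_left hts]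
  exact rpow_sub_rpow_le_mul_rpow_sub_one hq ht hts

lemma add_rpow_le_two_rpow_mul_add_rpow {p A B : ℝ} (hp : 0 ≤ p) (hA : 0 ≤ A) (hB : 0 ≤ B) :
    (A + B) ^ p ≤ 2 ^ p * (A ^ p + B ^ p) := by
  wlog hAB : A ≤ B generalizing A B
  · rw [add_comm A, add_comm (A ^ p)]
    exact this hB hA (le_of_not_ge hAB)
  calc (A + B) ^ p ≤ (2 * B) ^ p := rpow_le_rpow (by positivity) (by linarith) hp
    _ = 2 ^ p * B ^ p := mul_rpow zero_le_two hB
    _ ≤ 2 ^ p * (A ^ p + B ^ p) := by gcongr; linarith [rpow_nonneg hA p]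

lemma le_two_rpow_mul_mul_rpow_div_rpow {a s t u : ℝ} (ha : 0 ≤ a) (ht : 0 ≤ t) (hu : 0 < u)
    (hus : u ≤ 2 * s) : t ≤ 2 ^ a * (t * s ^ a / u ^ a) := by
  have hua : u ^ a ≤ 2 ^ a * s ^ a := by
    rw [← mul_rpow zero_le_two (by linarith)]
    exact rpow_le_rpow hu.le hus ha
  rw [← mul_div_assoc, le_div_iff₀ (rpow_pos_of_pos hu a)]
  nlinarith

lemma rpow_sub_one_mul_le_rpow_add_ite {q r m : ℝ} (hq : 1 ≤ q) (hm : 0 ≤ m) :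
    r ^ (q - 1) * m ≤ m ^ q + if 1 < q then r ^ (q - 1) * m else 0 := by
  split_ifs with h
  · linarith [rpow_nonneg hm q]
  · obtain rfl : q = 1 := le_antisymm (not_lt.1 h) hq
    simp

section Cases

variable {q x y u : ℝ}

lemma abs_truncated_rpow_sub_le_of_large {a : ℝ} (hq : 0 ≤ q) (ha : 0 ≤ a) (hu : 0 < u)
    (hx : u ≤ 2 * |x|) :
    |(if |x + y| ≤ u then |x + y| ^ q else 0) - |x| ^ q| ≤
      (2 ^ q + 1) * 2 ^ a * (|x| ^ (q + a) / u ^ a) := by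
  have htrunc : (if |x + y| ≤ u then |x + y| ^ q else 0) ∈ Set.Icc 0 (u ^ q) := by
    split_ifs with h
    · exact ⟨by positivity, rpow_le_rpow (abs_nonneg _) h hq⟩
    · exact ⟨le_rfl, by positivity⟩
  have huq : u ^ q ≤ 2 ^ q * |x| ^ q := by
    rw [← mul_rpow zero_le_two (abs_nonneg x)]
    exact rpow_le_rpow hu.le hx hq
  have hxq := le_two_rpow_mul_mul_rpow_div_rpow ha (rpow_nonneg (abs_nonneg x) q) hu hx
  rw [← rpow_add (by linarith)] at hxq
  have hxq₀ : 0 ≤ |x| ^ q := by positivity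
  obtain ⟨htrunc₀, htruncU⟩ := htrunc
  calc _ ≤ u ^ q + |x| ^ q :=
        abs_sub_le_iff.2 ⟨by linarith, by linarith [htrunc₀.trans htruncU]⟩
    _ ≤ (2 ^ q + 1) * |x| ^ q := by linarith
    _ ≤ (2 ^ q + 1) * (2 ^ a * (|x| ^ (q + a) / u ^ a)) := by gcongr
    _ = _ := by ring

lemma abs_truncated_rpow_sub_le_of_jump {b : ℝ} (hb : 0 ≤ b) (hu : 0 < u) (hx : |x| < u / 2)
    (hxy : u < |x + y|) :
    |(if |x + y| ≤ u then |x + y| ^ q else 0) - |x| ^ q| ≤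
      2 ^ b * (|x| ^ q * |y| ^ b / u ^ b) := by
  rw [if_neg hxy.not_ge, zero_sub, abs_neg, abs_of_nonneg (rpow_nonneg (abs_nonneg x) q)]
  exact le_two_rpow_mul_mul_rpow_div_rpow hb (by positivity) hu
    (by linarith [abs_add_le x y])

lemma abs_truncated_rpow_sub_le_of_small (hq : 1 ≤ q) (hx : |x| < u / 2) (hxy : |x + y| ≤ u) :
    |(if |x + y| ≤ u then |x + y| ^ q else 0) - |x| ^ q| ≤
      q * 2 ^ (q - 1) * 2 ^ q * (|x| ^ (q - 1) * min |y| u + min |y| u ^ q) := by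
  rw [if_pos hxy]
  have hy : |y| ≤ 2 * min |y| u := by
    have : |y| ≤ |x + y| + |x| := by simpa using abs_sub (x + y) x
    rcases le_total |y| u with h | h <;> simp only [h, min_eq_left, min_eq_right] <;>
      linarith [abs_nonneg y]
  have hmax : max |x + y| |x| ≤ |x| + |y| :=
    max_le (abs_add_le x y) (by linarith [abs_nonneg y])
  have hincr : |(|x + y| - |x|)| ≤ |y| := by simpa using abs_abs_sub_abs_le_abs_sub (x + y) x
  have hq1 : 0 ≤ q - 1 := by linarith
  have hm : 0 ≤ min |y| u := le_min (abs_nonneg y) (by linarith [abs_nonneg x])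
  have hyq : |y| ^ (q - 1) * |y| = |y| ^ q := by
    conv_rhs => rw [← sub_add_cancel q 1, rpow_add' (abs_nonneg y) (by linarith), rpow_one]
  have h2q : 2 ≤ (2 : ℝ) ^ q := by simpa using rpow_le_rpow_of_exponent_le one_le_two hq
  have hxm : 0 ≤ |x| ^ (q - 1) * min |y| u := by positivity
  calc _ ≤ q * max |x + y| |x| ^ (q - 1) * |(|x + y| - |x|)| :=
        abs_rpow_sub_rpow_le hq (abs_nonneg _) (abs_nonneg _)
    _ ≤ q * (|x| + |y|) ^ (q - 1) * |y| := by gcongr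
    _ ≤ q * (2 ^ (q - 1) * (|x| ^ (q - 1) + |y| ^ (q - 1))) * |y| := by
        gcongr; exact add_rpow_le_two_rpow_mul_add_rpow hq1 (abs_nonneg x) (abs_nonneg y)
    _ = q * 2 ^ (q - 1) * (|x| ^ (q - 1) * |y| + |y| ^ q) := by rw [← hyq]; ring
    _ ≤ q * 2 ^ (q - 1) * (|x| ^ (q - 1) * (2 * min |y| u) + (2 * min |y| u) ^ q) := by
        gcongr
    _ ≤ q * 2 ^ (q - 1) * (2 ^ q * (|x| ^ (q - 1) * min |y| u + min |y| u ^ q)) := by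
        rw [mul_rpow zero_le_two hm]
        gcongr
        nlinarith
    _ = _ := by ring

end Cases

/-- Truncated-power inequality used in the proof of jump-robustness of the
subsampled covariance estimator (Theorem A.2). -/
theorem truncated_power_inequality (q a b : ℝ) (hq : 1 ≤ q) (ha : 0 ≤ a) (hb : 0 ≤ b) :
    ∃ C : ℝ, 0 < C ∧ ∀ x y u : ℝ, 0 < u →
      |(if |x + y| ≤ u then |x + y| ^ q else 0) - |x| ^ q| ≤
        C * (|x| ^ (q + a) / u ^ a + |x| ^ q * |y| ^ b / u ^ b +
          (min |y| u) ^ q + if 1 < q then |x| ^ (q - 1) * min |y| u else 0) := by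
  have hq0 : 0 ≤ q := by linarith
  have hc₁ : 0 ≤ ((2 : ℝ) ^ q + 1) * 2 ^ a := by positivity
  have hc₂ : 0 ≤ (2 : ℝ) ^ b := by positivity
  have hK : 0 ≤ q * 2 ^ (q - 1) * 2 ^ q := by positivity
  refine ⟨(2 ^ q + 1) * 2 ^ a + 2 ^ b + 2 * (q * 2 ^ (q - 1) * 2 ^ q), by positivity,
    fun x y u hu => ?_⟩
  have hm : 0 ≤ min |y| u := le_min (abs_nonneg y) hu.le
  have hT₁ : 0 ≤ |x| ^ (q + a) / u ^ a := by positivity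
  have hT₂ : 0 ≤ |x| ^ q * |y| ^ b / u ^ b := by positivity
  have hT₃ : 0 ≤ min |y| u ^ q := by positivity
  have hT₄ : 0 ≤ if 1 < q then |x| ^ (q - 1) * min |y| u else 0 := by split_ifs <;> positivity
  set S := |x| ^ (q + a) / u ^ a + |x| ^ q * |y| ^ b / u ^ b + min |y| u ^ q +
    if 1 < q then |x| ^ (q - 1) * min |y| u else 0
  have hS : 0 ≤ S := by positivity
  rcases le_or_gt (u / 2) |x| with hx | hx
  · calc _ ≤ (2 ^ q + 1) * 2 ^ a * (|x| ^ (q + a) / u ^ a) :=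
          abs_truncated_rpow_sub_le_of_large hq0 ha hu (by linarith)
      _ ≤ _ := mul_le_mul (by linarith) (by linarith) hT₁ (by positivity)
  rcases lt_or_ge u |x + y| with hxy | hxy
  · calc _ ≤ 2 ^ b * (|x| ^ q * |y| ^ b / u ^ b) :=
          abs_truncated_rpow_sub_le_of_jump hb hu hx hxy
      _ ≤ _ := mul_le_mul (by linarith) (by linarith) hT₂ (by positivity)
  · have hsmall : |x| ^ (q - 1) * min |y| u + min |y| u ^ q ≤ 2 * S := by
      linarith [rpow_sub_one_mul_le_rpow_add_ite (r := |x|) hq hm]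
    calc _ ≤ q * 2 ^ (q - 1) * 2 ^ q * (|x| ^ (q - 1) * min |y| u + min |y| u ^ q) :=
          abs_truncated_rpow_sub_le_of_small hq hx hxy
      _ ≤ 2 * (q * 2 ^ (q - 1) * 2 ^ q) * S := by nlinarith
      _ ≤ _ := mul_le_mul_of_nonneg_right (by linarith) hS
end

section
/- Let (Ω, F, P) be a probability space, let σ > 0 and τ > 0, let (X_l)_{l≥1} be an independent, identically distributed sequence of real random variables each with law N(0, σ²), and let Y be a random variable with law N(0, σ² + τ²) that is independent of the sequence (X_l). For L ≥ 1 define Z_L = Y / √((1/L)·∑_{l=1}^{L} X_l²). Let α ∈ (0, 1) and let c > 0 satisfy N(0, 1)({x : |x| > c}) = α. Then lim_{L→∞} P(|Z_L| > c) = N(0, 1 + τ²/σ²)({x : |x| > c}), and this limit is strictly greater than α and strictly less than 1. -/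
open MeasureTheory ProbabilityTheory Filter
open scoped NNReal Topology

/-!
By the strong law of large numbers `(1/L) ∑_{l ≤ L} X_l² → σ²` almost surely, so
`Z_L → Y / σ` almost surely, and `Y / σ ∼ N(0, 1 + τ²/σ²)`. This law does not charge the boundary
`{|x| = c}` of the rejection region, so `P(|Z_L| > c)` converges to its mass
`N(0, 1 + τ²/σ²)(|x| > c)`. Writing `N(0, s²)` as the image of `N(0, 1)` under `x ↦ s x`, that
mass is `N(0, 1)(|x| > c / s)` with `s > 1`: it exceeds `α = N(0, 1)(|x| > c)` by the positive mass
of `(c / s, c)`, and it is below `1` because `(-c, c)` has positive mass.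
-/

lemma integral_sq_gaussianReal (μ : ℝ) (v : ℝ≥0) :
    ∫ x, x ^ 2 ∂gaussianReal μ v = v + μ ^ 2 := by
  have h := variance_eq_sub (memLp_id_gaussianReal (μ := μ) (v := v) 2)
  simp only [variance_id_gaussianReal] at h
  simp [h]

lemma integrable_sq_gaussianReal (μ : ℝ) (v : ℝ≥0) :
    Integrable (fun x => x ^ 2) (gaussianReal μ v) :=
  (memLp_id_gaussianReal (μ := μ) (v := v) 2).integrable_sq

lemma gaussianReal_setOf_abs_eq_eq_zero (μ : ℝ) {v : ℝ≥0} (hv : v ≠ 0) (c : ℝ) :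
    gaussianReal μ v {x | |x| = c} = 0 := by
  have := nullSingletonClass_gaussianReal (μ := μ) hv
  refine measure_mono_null (fun x (hx : |x| = c) => ?_) ((Set.toFinite {c, -c}).measure_zero _)
  rcases abs_choice x with h | h <;> simp [← hx, h]

lemma gaussianReal_Ioo_pos (μ : ℝ) {v : ℝ≥0} (hv : v ≠ 0) {a b : ℝ} (hab : a < b) :
    0 < gaussianReal μ v (Set.Ioo a b) := by
  refine pos_iff_ne_zero.mpr fun h => ?_
  have := gaussianReal_absolutelyContinuous' μ hv h
  simp [Real.volume_Ioo] at this
  linarith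

lemma gaussianReal_setOf_lt_abs_strictAntiOn (μ : ℝ) {v : ℝ≥0} (hv : v ≠ 0) :
    StrictAntiOn (fun c => gaussianReal μ v {x | c < |x|}) (Set.Ici 0) := by
  intro a (ha : 0 ≤ a) b _ hab
  have hsub : {x : ℝ | b < |x|} ⊆ {x | a < |x|} := fun x hx => hab.trans hx
  have hgap : Set.Ioo a b ⊆ {x : ℝ | a < |x|} \ {x | b < |x|} := fun x hx => by
    simp only [Set.mem_sdiff, Set.mem_ofPred_eq, abs_of_pos (ha.trans_lt hx.1), not_lt]
    exact ⟨hx.1, hx.2.le⟩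
  calc gaussianReal μ v {x | b < |x|}
      < gaussianReal μ v {x | b < |x|} + gaussianReal μ v ({x | a < |x|} \ {x | b < |x|}) :=
        ENNReal.lt_add_right (measure_ne_top _ _)
          ((gaussianReal_Ioo_pos μ hv hab).trans_le (measure_mono hgap)).ne'
    _ = gaussianReal μ v {x | a < |x|} := by
        rw [measure_add_sdiff (measurableSet_lt measurable_const measurable_abs).nullMeasurableSet,
          Set.union_eq_self_of_subset_left hsub]

lemma gaussianReal_setOf_lt_abs_lt_one (μ : ℝ) {v : ℝ≥0} (hv : v ≠ 0) {c : ℝ} (hc : 0 < c) :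
    gaussianReal μ v {x | c < |x|} < 1 := by
  have hsub : {x : ℝ | c < |x|} ⊆ (Set.Ioo (-c) c)ᶜ := fun x hx hx' =>
    (abs_lt.mpr hx').not_gt hx
  calc gaussianReal μ v {x | c < |x|} ≤ gaussianReal μ v (Set.Ioo (-c) c)ᶜ := measure_mono hsub
    _ < 1 := by
      rw [prob_compl_eq_one_sub measurableSet_Ioo]
      exact ENNReal.sub_lt_self ENNReal.one_ne_top one_ne_zero
        (gaussianReal_Ioo_pos μ hv (neg_lt_self hc)).ne'

lemma gaussianReal_setOf_lt_abs_lt_of_var_lt {v w : ℝ≥0} (hv : v ≠ 0) (hvw : v < w) {c : ℝ}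
    (hc : 0 < c) : gaussianReal 0 v {x | c < |x|} < gaussianReal 0 w {x | c < |x|} := by
  set s := √(w / v)
  have hs : 1 < s := by
    refine Real.lt_sqrt zero_le_one |>.mpr ?_
    rw [one_pow, one_lt_div (by positivity)]
    exact_mod_cast hvw
  have hw : gaussianReal 0 w = (gaussianReal 0 v).map (s * ·) := by
    rw [gaussianReal_map_const_mul, mul_zero]
    congr
    ext
    rw [NNReal.coe_mul, NNReal.coe_mk, Real.sq_sqrt (by positivity),
      div_mul_cancel₀ _ (NNReal.coe_ne_zero.mpr hv)]
  have hpre : (s * ·) ⁻¹' {x : ℝ | c < |x|} = {x | c / s < |x|} := by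
    ext x
    simp [abs_mul, abs_of_pos (zero_lt_one.trans hs), div_lt_iff₀ (zero_lt_one.trans hs), mul_comm]
  rw [hw, Measure.map_apply (measurable_const_mul s)
    (measurableSet_lt measurable_const measurable_abs), hpre]
  exact gaussianReal_setOf_lt_abs_strictAntiOn 0 hv (by positivity : 0 ≤ c / s) hc.le
    (div_lt_self hc hs)

section

variable {Ω : Type*} [MeasurableSpace Ω] {P : Measure Ω}

lemma ae_tendsto_average_Icc {G : ℕ → Ω → ℝ} {ν : Measure ℝ} {f : ℝ → ℝ}
    (hf : Measurable f) (hfν : Integrable f ν) (hG : ∀ n, AEMeasurable (G n) P)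
    (hindep : Pairwise fun i j => G i ⟂ᵢ[P] G j) (hlaw : ∀ n, 1 ≤ n → P.map (G n) = ν) :
    ∀ᵐ ω ∂P, Tendsto (fun L : ℕ => (1 / (L : ℝ)) * ∑ l ∈ Finset.Icc 1 L, f (G l ω))
      atTop (𝓝 (∫ x, f x ∂ν)) := by
  set X : ℕ → Ω → ℝ := fun n => f ∘ G (n + 1)
  have hident : ∀ n, IdentDistrib (X n) (X 0) P P := fun n =>
    IdentDistrib.comp ⟨hG _, hG _, by rw [hlaw _ (Nat.le_add_left 1 n), hlaw 1 le_rfl]⟩ hf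
  have hint : Integrable (X 0) P := by
    rw [← hlaw 1 le_rfl] at hfν
    exact (integrable_map_measure hf.aestronglyMeasurable (hG 1)).mp hfν
  have hmean : P[X 0] = ∫ x, f x ∂ν := by
    rw [← hlaw 1 le_rfl, integral_map (hG 1) hf.aestronglyMeasurable]; rfl
  have hX := strong_law_ae_real X hint
    (fun i j hij => (hindep (by omega : i + 1 ≠ j + 1)).comp hf hf) hident
  filter_upwards [hX] with ω hω
  rw [← hmean]
  refine hω.congr fun L => ?_
  change (∑ i ∈ Finset.range L, f (G (i + 1) ω)) / L = _
  rw [Finset.range_eq_Ico, Finset.sum_Ico_add' (fun l => f (G l ω)), zero_add,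
    Finset.Ico_add_one_right_eq_Icc, one_div, inv_mul_eq_div]

lemma tendsto_measure_preimage_of_ae_tendsto {α : Type*} [TopologicalSpace α] [MeasurableSpace α]
    [IsFiniteMeasure P] {Z : ℕ → Ω → α} {Z' : Ω → α} {U : Set α} (hU : MeasurableSet U)
    (hZ : ∀ n, Measurable (Z n)) (hZ' : Measurable Z')
    (hlim : ∀ᵐ ω ∂P, Tendsto (Z · ω) atTop (𝓝 (Z' ω))) (hfr : P (Z' ⁻¹' frontier U) = 0) :
    Tendsto (fun n => P (Z n ⁻¹' U)) atTop (𝓝 (P (Z' ⁻¹' U))) := by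
  refine tendsto_measure_of_ae_tendsto_indicator_of_isFiniteMeasure atTop (hZ' hU)
    (fun n => hZ n hU) ?_
  filter_upwards [hlim, measure_eq_zero_iff_ae_notMem.mp hfr] with ω hω hfrω
  obtain hcl | hint : Z' ω ∉ closure U ∨ Z' ω ∈ interior U := by
    by_contra! h
    exact hfrω ⟨h.1, h.2⟩
  · filter_upwards [hω.eventually (isOpen_compl_iff.mpr isClosed_closure |>.mem_nhds hcl)]
      with n hn
    exact iff_of_false (fun h => hn (subset_closure h)) fun h => hcl (subset_closure h)
  · filter_upwards [hω.eventually (isOpen_interior.mem_nhds hint)] with n hn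
    exact iff_of_true (interior_subset (s := U) hn) (interior_subset (s := U) hint)

lemma ae_tendsto_div_sqrt_mean_sq {σ : ℝ} (hσ : 0 < σ) {G : ℕ → Ω → ℝ}
    (hG : ∀ n, AEMeasurable (G n) P) (hindep : Pairwise fun i j => G i ⟂ᵢ[P] G j)
    (hlaw : ∀ n, 1 ≤ n → P.map (G n) = gaussianReal 0 ⟨σ ^ 2, sq_nonneg σ⟩) (Y : Ω → ℝ) :
    ∀ᵐ ω ∂P, Tendsto (fun L : ℕ => Y ω / √((1 / (L : ℝ)) * ∑ l ∈ Finset.Icc 1 L, G l ω ^ 2))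
      atTop (𝓝 (Y ω / σ)) := by
  have hsecond : ∫ x, x ^ 2 ∂gaussianReal 0 ⟨σ ^ 2, sq_nonneg σ⟩ = σ ^ 2 :=
    (integral_sq_gaussianReal _ _).trans (add_eq_left.mpr (zero_pow two_ne_zero))
  have hmean_sq := hsecond ▸ ae_tendsto_average_Icc (continuous_pow 2).measurable
    (integrable_sq_gaussianReal 0 _) hG hindep hlaw
  filter_upwards [hmean_sq] with ω hω
  refine tendsto_const_nhds.div ?_ hσ.ne'
  rw [← Real.sqrt_sq hσ.le]
  exact (Real.continuous_sqrt.tendsto _).comp hω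

lemma tendsto_measure_lt_abs_of_ae_tendsto_gaussianReal [IsFiniteMeasure P]
    {Z : ℕ → Ω → ℝ} {Z' : Ω → ℝ}
    (hZ : ∀ n, Measurable (Z n)) (hZ' : Measurable Z')
    (hlim : ∀ᵐ ω ∂P, Tendsto (Z · ω) atTop (𝓝 (Z' ω))) {μ : ℝ} {v : ℝ≥0} (hv : v ≠ 0)
    (hlaw : P.map Z' = gaussianReal μ v) (c : ℝ) :
    Tendsto (fun n => P {ω | c < |Z n ω|}) atTop (𝓝 (gaussianReal μ v {x | c < |x|})) := by
  have hU : MeasurableSet {x : ℝ | c < |x|} := measurableSet_lt measurable_const measurable_abs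
  have hfrontier : P (Z' ⁻¹' frontier {x | c < |x|}) = 0 := by
    refine measure_mono_null (Set.preimage_mono (t := {x | |x| = c}) fun x hx =>
      (frontier_lt_subset_eq continuous_const continuous_abs hx).symm) ?_
    rw [← Measure.map_apply hZ' (measurableSet_eq_fun measurable_abs measurable_const), hlaw]
    exact gaussianReal_setOf_abs_eq_eq_zero μ hv c
  have h := tendsto_measure_preimage_of_ae_tendsto hU hZ hZ' hlim hfrontier
  rwa [← Measure.map_apply hZ' hU, hlaw] at h

end

/-- Rejection probability of the close-to-open jump test under the alternative: with
`Y = G 0 ∼ N(0, σ² + τ²)` independent of the i.i.d. `N(0, σ²)` sequence `G l`, `l ≥ 1`,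
the statistic `Z_L = Y / √((1/L) ∑_{l=1}^L G l²)` satisfies
`P(|Z_L| > c) → N(0, 1 + τ²/σ²)({|x| > c})`, which is strictly between `α` and `1`,
where `c` is the two-sided standard normal critical value at level `α`. -/
theorem close_to_open_test_rejection_probability
    {Ω : Type*} [MeasurableSpace Ω] (P : Measure Ω) [IsProbabilityMeasure P]
    (σ τ : ℝ) (hσ : 0 < σ) (hτ : 0 < τ) (G : ℕ → Ω → ℝ)
    (hmeas : ∀ n, Measurable (G n))
    (hindep : iIndepFun G P)
    (hlaw0 : Measure.map (G 0) P = gaussianReal 0 ⟨σ ^ 2 + τ ^ 2, by positivity⟩)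
    (hlaw : ∀ n, 1 ≤ n → Measure.map (G n) P = gaussianReal 0 ⟨σ ^ 2, sq_nonneg σ⟩)
    (α : ℝ) (c : ℝ) (hc : 0 < c)
    (hcrit : (gaussianReal 0 1 {x : ℝ | c < |x|}).toReal = α) :
    Tendsto
        (fun L : ℕ =>
          (P {ω | c < |G 0 ω / Real.sqrt ((1 / (L : ℝ)) * ∑ l ∈ Finset.Icc 1 L, (G l ω) ^ 2)|}).toReal)
        atTop
        (nhds ((gaussianReal 0 ⟨1 + τ ^ 2 / σ ^ 2, by positivity⟩ {x : ℝ | c < |x|}).toReal)) ∧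
      α < (gaussianReal 0 ⟨1 + τ ^ 2 / σ ^ 2, by positivity⟩ {x : ℝ | c < |x|}).toReal ∧
      (gaussianReal 0 ⟨1 + τ ^ 2 / σ ^ 2, by positivity⟩ {x : ℝ | c < |x|}).toReal < 1 := by
  set v : ℝ≥0 := ⟨1 + τ ^ 2 / σ ^ 2, by positivity⟩
  have h1v : 1 < v := by
    rw [← NNReal.coe_lt_coe]
    exact lt_add_of_pos_right 1 (by positivity)
  have hlaw_limit : P.map (G 0 · / σ) = gaussianReal 0 v := by
    change P.map ((· / σ) ∘ G 0) = _
    rw [← Measure.map_map (measurable_div_const σ) (hmeas 0), hlaw0]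
    refine (gaussianReal_map_div_const σ).trans ?_
    rw [zero_div]
    congr
    ext
    change (σ ^ 2 + τ ^ 2) / σ ^ 2 = 1 + τ ^ 2 / σ ^ 2
    field_simp
  have hZ := ae_tendsto_div_sqrt_mean_sq hσ (fun n => (hmeas n).aemeasurable)
    (fun i j hij => hindep.indepFun hij) hlaw (G 0)
  have hlim := tendsto_measure_lt_abs_of_ae_tendsto_gaussianReal (fun L => by fun_prop)
    ((hmeas 0).div_const σ) hZ (one_pos.trans h1v).ne' hlaw_limit c
  refine ⟨(ENNReal.tendsto_toReal (measure_ne_top _ _)).comp hlim, ?_, ?_⟩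
  · rw [← hcrit]
    exact ENNReal.toReal_strict_mono (measure_ne_top _ _)
      (gaussianReal_setOf_lt_abs_lt_of_var_lt one_ne_zero h1v hc)
  · exact ENNReal.toReal_lt_of_lt_ofReal (by
      simpa using gaussianReal_setOf_lt_abs_lt_one 0 (one_pos.trans h1v).ne' hc)
end
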